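/- Let q be a prime power and let e, f ≥ 2 be integers with ef = q - 1. Let α be a generator of the multiplicative group of the finite field F_q, and for 0 ≤ i ≤ e-1 let C_i = {α^t : t ≡ i (mod e)} be the cosets of the subgroup C_0 of e-th powers. Then for every nonzero x ∈ F_q, the number of pairs (c, c') with c, c' lying in the same coset C_i (for some i), c ≠ c', and x = c - c', equals f - 1. In other words, {C_0,...,C_{e-1}} is a (q, f, f-1) near-complete disjoint difference family in the additive group of F_q. -/

import Mathlib

/-! The cosets `C i` are the cosets of `H = ⟨α^e⟩`, a subgroup of order `f` in `F^*`. A pair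
`(c, c')` of distinct elements of a common coset is `(h c', c')` with `h ∈ H \ {1}`, and then
`c - c' = x` forces `c' = x / (h - 1)`; so the representations of `x` are in bijection with
`H \ {1}`. -/

open Finset

open scoped Classical in
/-- The coset `C i = {α^t : t ≡ i (mod e)}` of the subgroup of `e`-th powers in `F^*`. -/
noncomputable def cyclotomicCoset {F : Type*} [Field F] [Fintype F]
    (α : Fˣ) (e i : ℕ) : Finset F :=
  Finset.univ.filter (fun x => ∃ t : ℕ, x = (α : F) ^ t ∧ t % e = i)

open scoped Classical in
/-- Multiplicity of `x` in the internal difference multiset `ΔA`. -/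
noncomputable def diffCount {G : Type*} [AddCommGroup G] (A : Finset G) (x : G) : ℕ :=
  ((A ×ˢ A).filter (fun q => q.1 ≠ q.2 ∧ q.1 - q.2 = x)).card

open scoped Classical in
theorem sum_diffCount_of_pairwiseDisjoint {G ι : Type*} [AddCommGroup G] [Fintype G]
    {s : Finset ι} {A : ι → Finset G} (hA : (s : Set ι).PairwiseDisjoint A) (x : G) :
    ∑ i ∈ s, diffCount (A i) x =
      #{p : G × G | (∃ i ∈ s, p.1 ∈ A i ∧ p.2 ∈ A i) ∧ p.1 ≠ p.2 ∧ p.1 - p.2 = x} := by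
  have hsquares : (s : Set ι).PairwiseDisjoint fun i => A i ×ˢ A i :=
    fun i hi j hj hij => disjoint_product.2 (.inl (hA hi hj hij))
  unfold diffCount
  rw [← card_biUnion (hsquares.mono fun i => filter_subset _ _), ← filter_biUnion]
  congr 1
  ext p
  simp

open scoped Classical in
theorem card_sameCoset_pairs_sub_eq {F : Type*} [Field F] [Fintype F] (H : Subgroup Fˣ)
    {x : F} (hx : x ≠ 0) :
    #{p : F × F | (p.2 ≠ 0 ∧ ∃ h ∈ H, p.1 = h * p.2) ∧ p.1 ≠ p.2 ∧ p.1 - p.2 = x} =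
      Nat.card H - 1 := by
  have hH : Nat.card H - 1 = #((univ.filter (· ∈ H)).erase 1) := by
    rw [card_erase_of_mem (by simp [H.one_mem]), ← Fintype.card_subtype,
      Nat.card_eq_fintype_card]
  rw [hH, eq_comm]
  have hsub : ∀ h : Fˣ, h ≠ 1 → (h : F) - 1 ≠ 0 := fun h h1 =>
    sub_ne_zero.2 (mt Units.val_eq_one.1 h1)
  refine card_bij (fun (h : Fˣ) _ => ((h : F) * (x / (h - 1)), x / (h - 1))) ?_ ?_ ?_
  · intro h hh
    simp only [mem_erase, mem_filter, mem_univ, true_and] at hh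
    have hy : x / (h - 1) ≠ 0 := div_ne_zero hx (hsub h hh.1)
    simp only [mem_filter, mem_univ, true_and, ne_eq, mul_eq_right₀ hy, Units.val_eq_one]
    exact ⟨⟨hy, h, hh.2, rfl⟩, hh.1, by field_simp [hsub h hh.1]⟩
  · intro h₁ _ h₂ hh₂ heq
    simp only [mem_erase, mem_filter, mem_univ, true_and, Prod.mk.injEq] at hh₂ heq
    obtain ⟨hfst, hsnd⟩ := heq
    rw [hsnd] at hfst
    exact Units.val_injective (mul_right_cancel₀ (div_ne_zero hx (hsub h₂ hh₂.1)) hfst)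
  · rintro ⟨c, y⟩ hp
    simp only [mem_filter, mem_univ, true_and] at hp
    obtain ⟨⟨hy, h, hh, rfl⟩, hne, hdiff⟩ := hp
    have h1 : h ≠ 1 := by rintro rfl; simp at hne
    refine ⟨h, by simp [h1, hh], ?_⟩
    have : y = x / (h - 1) := by rw [← hdiff]; field_simp [hsub h h1]
    simp [← this]

theorem pow_mul_inv_pow_mem_zpowers_pow {G : Type*} [Group G] (g : G) {e s t : ℕ}
    (hst : s ≡ t [MOD e]) : g ^ t * (g ^ s)⁻¹ ∈ Subgroup.zpowers (g ^ e) := by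
  obtain ⟨m, hm⟩ := Nat.modEq_iff_dvd.1 hst
  refine Subgroup.mem_zpowers_iff.2 ⟨m, ?_⟩
  rw [← zpow_natCast, ← zpow_mul, ← hm, zpow_sub, zpow_natCast, zpow_natCast]

section cyclotomicCoset

open Function

variable {F : Type*} [Field F] [Fintype F] {α : Fˣ} {e : ℕ}

theorem mem_cyclotomicCoset {i : ℕ} {y : F} :
    y ∈ cyclotomicCoset α e i ↔ ∃ t : ℕ, y = (α : F) ^ t ∧ t % e = i := by
  simp [cyclotomicCoset]

theorem pairwise_disjoint_cyclotomicCoset (he : e ∣ orderOf α) :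
    Pairwise (Disjoint on (cyclotomicCoset α e)) := by
  intro i j hij
  refine disjoint_left.2 fun y hi hj => hij ?_
  obtain ⟨t, rfl, rfl⟩ := mem_cyclotomicCoset.1 hi
  obtain ⟨s, hs, rfl⟩ := mem_cyclotomicCoset.1 hj
  have : α ^ t = α ^ s := Units.val_injective (by simpa using hs)
  exact (pow_eq_pow_iff_modEq.1 this).of_dvd he

theorem exists_mem_cyclotomicCoset_iff (hα : ∀ x : Fˣ, x ∈ Subgroup.zpowers α) (he : 0 < e)
    {y z : F} :
    (∃ i ∈ range e, y ∈ cyclotomicCoset α e i ∧ z ∈ cyclotomicCoset α e i) ↔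
      z ≠ 0 ∧ ∃ h ∈ Subgroup.zpowers (α ^ e), y = h * z := by
  simp only [mem_range, mem_cyclotomicCoset]
  constructor
  · rintro ⟨i, -, ⟨t, rfl, rfl⟩, ⟨s, rfl, hst⟩⟩
    exact ⟨pow_ne_zero _ α.ne_zero, _, pow_mul_inv_pow_mem_zpowers_pow α hst, by simp⟩
  · rintro ⟨hz, h, hh, rfl⟩
    obtain ⟨s, hs : α ^ s = Units.mk0 z hz⟩ :=
      mem_powers_iff_mem_zpowers.2 (hα (Units.mk0 z hz))
    obtain ⟨k, rfl⟩ := mem_powers_iff_mem_zpowers.2 hh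
    have hzs : z = (α : F) ^ s := by rw [← Units.val_pow_eq_pow_val, hs, Units.val_mk0]
    exact ⟨s % e, Nat.mod_lt _ he,
      ⟨e * k + s, by simp [hzs, pow_add, pow_mul], Nat.mul_add_mod e k s⟩, ⟨s, hzs, rfl⟩⟩

end cyclotomicCoset

theorem stmt3_general {F : Type*} [Field F] [Fintype F]
    (q e f : ℕ) (hq : Fintype.card F = q)
    (hef : e * f = q - 1)
    (α : Fˣ) (hα : ∀ x : Fˣ, x ∈ Subgroup.zpowers α) :
    ∀ x : F, x ≠ 0 →
      ∑ i ∈ Finset.range e, diffCount (cyclotomicCoset α e i) x = f - 1 := by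
  classical
  intro x hx
  have hord : orderOf α = e * f := by
    rw [orderOf_eq_card_of_forall_mem_zpowers hα, Nat.card_eq_fintype_card, Fintype.card_units,
      hq, hef]
  have he : 0 < e := Nat.pos_of_mul_pos_right (hord ▸ orderOf_pos α)
  have hdvd : e ∣ orderOf α := hord ▸ dvd_mul_right e f
  have hH : Nat.card (Subgroup.zpowers (α ^ e)) = f := by
    rw [Nat.card_zpowers, orderOf_pow_of_dvd he.ne' hdvd, hord, Nat.mul_div_cancel_left f he]
  rw [sum_diffCount_of_pairwiseDisjoint ((pairwise_disjoint_cyclotomicCoset hdvd).set_pairwise _)]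
  simp_rw [exists_mem_cyclotomicCoset_iff hα he]
  rw [card_sameCoset_pairs_sub_eq _ hx, hH]

/-- (Wilson) Let `q` be a prime power, `e, f ≥ 2` with `e * f = q - 1`, and `α` a
generator of `F_q^*`.  Then every nonzero `x ∈ F_q` has exactly `f - 1` representations
`x = c - c'` with `c ≠ c'` lying in a common coset `C i`; i.e. the cosets `C 0, …, C (e-1)` form
a `(q, f, f-1)` near-complete disjoint difference family in `(F_q, +)`. -/
theorem stmt3 {F : Type*} [Field F] [Fintype F]
    (q e f : ℕ) (hq : Fintype.card F = q)
    (he : 2 ≤ e) (hf : 2 ≤ f) (hef : e * f = q - 1)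
    (α : Fˣ) (hα : ∀ x : Fˣ, x ∈ Subgroup.zpowers α) :
    ∀ x : F, x ≠ 0 →
      ∑ i ∈ Finset.range e, diffCount (cyclotomicCoset α e i) x = f - 1 :=
  stmt3_general q e f hq hef α hα
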